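/- Let A ∈ R^{d×d}, m ∈ N, ε ≥ 0, and let Ā be A with its diagonal set to zero. Let D^m(A) = (1/m) Σ_{k=1}^m X^k ⊙ (AX^k) with i.i.d. Rademacher vectors X^k. Then P(||D^m(A) − diag(A)||_∞ ≥ ε) ≤ 2d exp(−ε² m / (2 ||Ā||_{2→∞}²)). -/

import Mathlib

open scoped BigOperators ENNReal
open MeasureTheory ProbabilityTheory

/-- The Rademacher law on ℝ: `±1` with probability `1/2` each. -/
noncomputable def rademacherLaw : Measure ℝ :=
  (2 : ℝ≥0∞)⁻¹ • Measure.dirac (1 : ℝ) + (2 : ℝ≥0∞)⁻¹ • Measure.dirac (-1 : ℝ)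

/-!
Fix a row `i`. Almost surely every `X k i` is a sign, so `X k i * (A X k) i = A i i + X k i * W k`
with `W k = ∑_{j ≠ i} A i j * X k j`, and the `i`-th error of the estimator is `m⁻¹ ∑ₖ X k i * W k`.
Each `W k` is a Rademacher sum, hence sub-Gaussian with variance proxy `vᵢ = ∑_{j ≠ i} A i j ^ 2`;
multiplying by the independent sign `X k i` preserves this, and the `m` products are independent
because they are functions of disjoint rows of `X`. The error is therefore sub-Gaussian with proxy
`vᵢ / m ≤ ‖Ā‖²_{2→∞} / m`, and a two-sided Chernoff bound followed by a union bound over the `d`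
rows gives the claim.
-/

open scoped NNReal

lemma Real.exp_mul_eq_cosh_add_mul_sinh {r : ℝ} (hr : r = 1 ∨ r = -1) (x : ℝ) :
    Real.exp (r * x) = Real.cosh x + r * Real.sinh x := by
  rcases hr with rfl | rfl
  · simp [Real.cosh_add_sinh]
  · simp [← Real.cosh_sub_sinh, sub_eq_add_neg]

lemma mul_sum_eq_add_mul_sum_sdiff {ι : Type*} [Fintype ι] [DecidableEq ι] (a x : ι → ℝ) {i : ι}
    (hx : x i * x i = 1) :
    x i * ∑ j, a j * x j = a i + x i * ∑ j ∈ Finset.univ \ {i}, a j * x j := by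
  rw [Finset.sum_eq_add_sum_sdiff_singleton_of_mem (Finset.mem_univ i), mul_add]
  linear_combination a i * hx

namespace MeasureTheory

lemma measureReal_le_iSup_le_sum {Ω ι : Type*} [MeasurableSpace Ω] {μ : Measure Ω}
    [IsFiniteMeasure μ] [Fintype ι] [Nonempty ι] (f : ι → Ω → ℝ) (ε : ℝ) :
    μ.real {ω | ε ≤ ⨆ i, f i ω} ≤ ∑ i, μ.real {ω | ε ≤ f i ω} := by
  refine (measureReal_mono fun ω hω ↦ ?_).trans (measureReal_iUnion_fintype_le _)
  obtain ⟨i, hi⟩ := exists_eq_ciSup_of_finite (f := fun i ↦ f i ω)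
  exact Set.mem_iUnion.2 ⟨i, (hi ▸ hω : ε ≤ f i ω)⟩

end MeasureTheory

namespace ProbabilityTheory

lemma integral_rademacherLaw (f : ℝ → ℝ) :
    ∫ x, f x ∂rademacherLaw = (f 1 + f (-1)) / 2 := by
  have hint (a : ℝ) : Integrable f ((2 : ℝ≥0∞)⁻¹ • Measure.dirac a) :=
    (integrable_dirac enorm_lt_top).smul_measure (by simp)
  rw [rademacherLaw, integral_add_measure (hint 1) (hint (-1)), integral_smul_measure,
    integral_smul_measure, integral_dirac, integral_dirac]
  simp only [ENNReal.toReal_inv, ENNReal.toReal_ofNat, smul_eq_mul]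
  ring

lemma ae_rademacherLaw : ∀ᵐ x ∂rademacherLaw, x = 1 ∨ x = -1 := by
  simp [rademacherLaw]

lemma hasSubgaussianMGF_id_rademacherLaw : HasSubgaussianMGF id 1 rademacherLaw where
  integrable_exp_mul t := by
    refine Integrable.add_measure ?_ ?_ <;>
      exact (integrable_dirac enorm_lt_top).smul_measure (by simp)
  mgf_le t := by
    rw [mgf, integral_rademacherLaw]
    simpa [Real.cosh_eq] using Real.cosh_le_exp_half_sq t

variable {Ω : Type*} [MeasurableSpace Ω] {μ : Measure Ω}

section Rademacher

variable {R : Ω → ℝ}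

lemma hasSubgaussianMGF_of_map_eq_rademacherLaw (hR : AEMeasurable R μ)
    (hlaw : μ.map R = rademacherLaw) : HasSubgaussianMGF R 1 μ :=
  (HasSubgaussianMGF.id_map_iff hR).1 (hlaw ▸ hasSubgaussianMGF_id_rademacherLaw)

lemma ae_eq_one_or_neg_one_of_map_eq_rademacherLaw (hR : AEMeasurable R μ)
    (hlaw : μ.map R = rademacherLaw) : ∀ᵐ ω ∂μ, R ω = 1 ∨ R ω = -1 :=
  ae_of_ae_map hR (hlaw ▸ ae_rademacherLaw)

lemma integral_eq_zero_of_map_eq_rademacherLaw (hR : AEMeasurable R μ)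
    (hlaw : μ.map R = rademacherLaw) : ∫ ω, R ω ∂μ = 0 := by
  have h := integral_map hR (f := fun x ↦ x) aestronglyMeasurable_id
  rw [hlaw, integral_rademacherLaw] at h
  linarith

end Rademacher

lemma HasSubgaussianMGF.mono {X : Ω → ℝ} {c c' : ℝ≥0} (h : HasSubgaussianMGF X c μ)
    (hc : c ≤ c') : HasSubgaussianMGF X c' μ where
  integrable_exp_mul := h.integrable_exp_mul
  mgf_le t := (h.mgf_le t).trans (Real.exp_le_exp.2 (by gcongr))

lemma HasSubgaussianMGF.measureReal_abs_ge_le {X : Ω → ℝ} {c : ℝ≥0}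
    (h : HasSubgaussianMGF X c μ) {ε : ℝ} (hε : 0 ≤ ε) :
    μ.real {ω | ε ≤ |X ω|} ≤ 2 * Real.exp (-ε ^ 2 / (2 * c)) := by
  have hsplit : {ω | ε ≤ |X ω|} = {ω | ε ≤ X ω} ∪ {ω | ε ≤ (-X) ω} := by
    ext ω; simp [le_abs]
  rw [hsplit, two_mul]
  exact (measureReal_union_le _ _).trans
    (add_le_add (h.measure_ge_le hε) (h.neg.measure_ge_le hε))

/-- Multiplying by an independent Rademacher sign symmetrizes the law, so the
moment generating function becomes `t ↦ 𝔼 cosh (t W)`. -/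
lemma HasSubgaussianMGF.rademacher_mul {R W : Ω → ℝ} {c : ℝ≥0} (hR : Measurable R)
    (hlaw : μ.map R = rademacherLaw) (hW : HasSubgaussianMGF W c μ) (hRW : IndepFun R W μ) :
    HasSubgaussianMGF (fun ω ↦ R ω * W ω) c μ := by
  have hsign := ae_eq_one_or_neg_one_of_map_eq_rademacherLaw hR.aemeasurable hlaw
  have hRint : Integrable R μ :=
    (hasSubgaussianMGF_of_map_eq_rademacherLaw hR.aemeasurable hlaw).integrable
  have hcosh (t : ℝ) : Integrable (fun ω ↦ Real.cosh (t * W ω)) μ := by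
    simp_rw [Real.cosh_eq, ← neg_mul]
    exact ((hW.integrable_exp_mul t).add (hW.integrable_exp_mul (-t))).div_const 2
  have hsinh (t : ℝ) : Integrable (fun ω ↦ Real.sinh (t * W ω)) μ := by
    simp_rw [Real.sinh_eq, ← neg_mul]
    exact ((hW.integrable_exp_mul t).sub (hW.integrable_exp_mul (-t))).div_const 2
  have hindep (t : ℝ) : IndepFun R (fun ω ↦ Real.sinh (t * W ω)) μ :=
    hRW.comp (φ := id) (ψ := fun w ↦ Real.sinh (t * w)) measurable_id (by fun_prop)
  have hexp (t : ℝ) : (fun ω ↦ Real.exp (t * (R ω * W ω))) =ᵐ[μ]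
      fun ω ↦ Real.cosh (t * W ω) + R ω * Real.sinh (t * W ω) := by
    filter_upwards [hsign] with ω hω
    rw [mul_left_comm, Real.exp_mul_eq_cosh_add_mul_sinh hω]
  have hprod_int (t : ℝ) : Integrable (fun ω ↦ R ω * Real.sinh (t * W ω)) μ :=
    (hindep t).integrable_mul hRint (hsinh t)
  have hprod (t : ℝ) : ∫ ω, R ω * Real.sinh (t * W ω) ∂μ = 0 := by
    have h := (hindep t).integral_mul_eq_mul_integral hRint.1 (hsinh t).1
    rwa [integral_eq_zero_of_map_eq_rademacherLaw hR.aemeasurable hlaw, zero_mul] at h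
  have hmgf (t : ℝ) : mgf (fun ω ↦ R ω * W ω) μ t = ∫ ω, Real.cosh (t * W ω) ∂μ := by
    rw [mgf, integral_congr_ae (hexp t), integral_add (hcosh t) (hprod_int t), hprod, add_zero]
  refine ⟨fun t ↦ ((hcosh t).add (hprod_int t)).congr (hexp t).symm, fun t ↦ ?_⟩
  have hcosh_eq : ∫ ω, Real.cosh (t * W ω) ∂μ = (mgf W μ t + mgf W μ (-t)) / 2 := by
    simp_rw [Real.cosh_eq, ← neg_mul]
    rw [integral_div, integral_add (hW.integrable_exp_mul t) (hW.integrable_exp_mul (-t))]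
    rfl
  have h_pos := hW.mgf_le t
  have h_neg := hW.mgf_le (-t)
  rw [neg_sq] at h_neg
  rw [hmgf, hcosh_eq]
  linarith

lemma iIndepFun.curry {ι κ 𝓧 : Type*} [MeasurableSpace 𝓧] {X : ι → κ → Ω → 𝓧}
    (mX : ∀ i j, Measurable (X i j)) (h : iIndepFun (fun p : ι × κ ↦ X p.1 p.2) μ) :
    iIndepFun (fun i ω ↦ (X i · ω)) μ := by
  have := h.isProbabilityMeasure
  have : ∀ i j, IsProbabilityMeasure (μ.map (X i j)) :=
    fun i j ↦ Measure.isProbabilityMeasure_map (mX i j).aemeasurable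
  have hrow (i : ι) : iIndepFun (X i) μ := h.precomp (g := Prod.mk i) (Prod.mk_right_injective i)
  have hcurry : (fun ω i j ↦ X i j ω) = MeasurableEquiv.curry ι κ 𝓧 ∘ fun ω p ↦ X p.1 p.2 ω :=
    rfl
  rw [iIndepFun_iff_map_fun_eq_infinitePi_map (by fun_prop), hcurry,
    ← Measure.map_map (by fun_prop) (by fun_prop),
    (iIndepFun_iff_map_fun_eq_infinitePi_map (by fun_prop)).1 h,
    Measure.infinitePi_map_curry (fun i j ↦ μ.map (X i j))]
  congr with i : 1
  rw [(iIndepFun_iff_map_fun_eq_infinitePi_map (mX i)).1 (hrow i)]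

lemma iIndepFun.indepFun_sum_mul_of_notMem {ι : Type*} {Y : ι → Ω → ℝ} (hind : iIndepFun Y μ)
    (hY : ∀ j, Measurable (Y j)) {s : Finset ι} {i : ι} (hi : i ∉ s) (a : ι → ℝ) :
    IndepFun (Y i) (fun ω ↦ ∑ j ∈ s, a j * Y j ω) μ := by
  have hφ : Measurable fun v : ({i} : Finset ι) → ℝ ↦ v ⟨i, Finset.mem_singleton_self i⟩ :=
    measurable_pi_apply _
  have hψ : Measurable fun v : s → ℝ ↦ ∑ j : s, a j * v j := by fun_prop
  have hsum : (fun ω ↦ ∑ j ∈ s, a j * Y j ω) =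
      (fun v ↦ ∑ j : s, a j * v j) ∘ fun ω (j : s) ↦ Y j ω := by
    funext ω
    exact (Finset.sum_coe_sort s (fun j ↦ a j * Y j ω)).symm
  rw [hsum]
  exact (hind.indepFun_finset {i} s (Finset.disjoint_singleton_left.2 hi) hY).comp hφ hψ

lemma hasSubgaussianMGF_sum_mul_rademacher {ι : Type*} {Y : ι → Ω → ℝ}
    (hY : ∀ j, Measurable (Y j)) (hind : iIndepFun Y μ)
    (hlaw : ∀ j, μ.map (Y j) = rademacherLaw) (a : ι → ℝ) (s : Finset ι) :
    HasSubgaussianMGF (fun ω ↦ ∑ j ∈ s, a j * Y j ω) (.mk (∑ j ∈ s, a j ^ 2) (by positivity))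
      μ := by
  have hterm (j : ι) : HasSubgaussianMGF (fun ω ↦ a j * Y j ω) (.mk (a j ^ 2) (sq_nonneg _)) μ :=
    ((hasSubgaussianMGF_of_map_eq_rademacherLaw (hY j).aemeasurable (hlaw j)).const_mul
      (a j)).mono (le_of_eq (mul_one _))
  refine (HasSubgaussianMGF.sum_of_iIndepFun (hind.comp (fun j x ↦ a j * x) fun j ↦ by fun_prop)
    fun j _ ↦ hterm j).mono (le_of_eq (NNReal.eq ?_))
  simp only [NNReal.coe_sum, NNReal.coe_mk]

section Hutchinson

variable {κ ι : Type*} [Fintype κ] [Fintype ι] [DecidableEq ι]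
  {X : Ω → κ → ι → ℝ}

lemma hasSubgaussianMGF_hutchinson_offDiag (hmeas : ∀ k i, Measurable fun ω ↦ X ω k i)
    (hindep : iIndepFun (fun p : κ × ι ↦ fun ω ↦ X ω p.1 p.2) μ)
    (hlaw : ∀ k i, μ.map (fun ω ↦ X ω k i) = rademacherLaw) (A : Matrix ι ι ℝ) (i : ι) :
    HasSubgaussianMGF (fun ω ↦ ∑ k, X ω k i * ∑ j ∈ Finset.univ \ {i}, A i j * X ω k j)
      (.mk (Fintype.card κ * ∑ j ∈ Finset.univ \ {i}, A i j ^ 2) (by positivity)) μ := by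
  have hrow (k : κ) : iIndepFun (fun j ω ↦ X ω k j) μ :=
    hindep.precomp (g := Prod.mk k) (Prod.mk_right_injective k)
  have hterm (k : κ) : HasSubgaussianMGF
      (fun ω ↦ X ω k i * ∑ j ∈ Finset.univ \ {i}, A i j * X ω k j)
      (.mk (∑ j ∈ Finset.univ \ {i}, A i j ^ 2) (by positivity)) μ :=
    (hasSubgaussianMGF_sum_mul_rademacher (hmeas k) (hrow k) (hlaw k) (A i) _).rademacher_mul
      (hmeas k i) (hlaw k i) ((hrow k).indepFun_sum_mul_of_notMem (hmeas k) (by simp) (A i))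
  have hterms : iIndepFun (fun k ω ↦ X ω k i * ∑ j ∈ Finset.univ \ {i}, A i j * X ω k j) μ :=
    (iIndepFun.curry (X := fun k j ω ↦ X ω k j) hmeas hindep).comp
      (fun _ v ↦ v i * ∑ j ∈ Finset.univ \ {i}, A i j * v j) (fun _ ↦ by fun_prop)
  refine (HasSubgaussianMGF.sum_of_iIndepFun hterms fun k _ ↦ hterm k).mono
    (le_of_eq (NNReal.eq ?_))
  simp only [Finset.sum_const, Finset.card_univ, nsmul_eq_mul, NNReal.coe_mul, NNReal.coe_natCast,
    NNReal.coe_mk]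

lemma hasSubgaussianMGF_hutchinson_error [Nonempty κ]
    (hmeas : ∀ k i, Measurable fun ω ↦ X ω k i)
    (hindep : iIndepFun (fun p : κ × ι ↦ fun ω ↦ X ω p.1 p.2) μ)
    (hlaw : ∀ k i, μ.map (fun ω ↦ X ω k i) = rademacherLaw) (A : Matrix ι ι ℝ) (i : ι) :
    HasSubgaussianMGF
      (fun ω ↦ (Fintype.card κ : ℝ)⁻¹ * (∑ k, X ω k i * ∑ j, A i j * X ω k j) - A i i)
      (.mk ((∑ j ∈ Finset.univ \ {i}, A i j ^ 2) / Fintype.card κ) (by positivity)) μ := by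
  have hsign : ∀ᵐ ω ∂μ, ∀ k, X ω k i * X ω k i = 1 := by
    refine ae_all_iff.2 fun k ↦ ?_
    filter_upwards [ae_eq_one_or_neg_one_of_map_eq_rademacherLaw (hmeas k i).aemeasurable
      (hlaw k i)] with ω hω
    rcases hω with h | h <;> simp [h]
  have hcard : (Fintype.card κ : ℝ) ≠ 0 := Nat.cast_ne_zero.2 Fintype.card_ne_zero
  refine (((hasSubgaussianMGF_hutchinson_offDiag hmeas hindep hlaw A i).const_mul
    (Fintype.card κ : ℝ)⁻¹).congr ?_).mono (le_of_eq ?_)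
  · filter_upwards [hsign] with ω hω
    simp_rw [mul_sum_eq_add_mul_sum_sdiff (A i) (X ω _) (hω _), Finset.sum_add_distrib,
      Finset.sum_const, Finset.card_univ, nsmul_eq_mul]
    field_simp
    ring
  · apply NNReal.eq
    change (Fintype.card κ : ℝ)⁻¹ ^ 2 * (Fintype.card κ * _) = _ / _
    field_simp

end Hutchinson

end ProbabilityTheory

theorem hutchinson_max_norm_concentration {Ω : Type*} [MeasurableSpace Ω]
    (μ : Measure Ω) [IsProbabilityMeasure μ] (d m : ℕ) (hd : 0 < d) (hm : 0 < m)
    (X : Ω → Fin m → Fin d → ℝ)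
    (hmeas : ∀ k i, Measurable fun ω => X ω k i)
    (hindep : iIndepFun (m := fun _ : Fin m × Fin d => (inferInstance : MeasurableSpace ℝ))
      (fun p ω => X ω p.1 p.2) μ)
    (hlaw : ∀ k i, μ.map (fun ω => X ω k i) = rademacherLaw)
    (A : Matrix (Fin d) (Fin d) ℝ) (ε : ℝ) (hε : 0 ≤ ε) :
    haveI : NeZero d := ⟨hd.ne'⟩
    μ {ω | ε ≤ ⨆ i : Fin d,
          |(m : ℝ)⁻¹ * (∑ k, X ω k i * (∑ j, A i j * X ω k j)) - A i i|}
      ≤ ENNReal.ofReal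
          (2 * d * Real.exp
            (-(ε ^ 2 * m) /
              (2 * (⨆ i : Fin d, ∑ j ∈ Finset.univ \ {i}, (A i j) ^ 2)))) := by
  have : Nonempty (Fin d) := ⟨⟨0, hd⟩⟩
  have : Nonempty (Fin m) := ⟨⟨0, hm⟩⟩
  set σ2 := ⨆ i : Fin d, ∑ j ∈ Finset.univ \ {i}, (A i j) ^ 2
  have hσ2 : 0 ≤ σ2 := Real.iSup_nonneg fun i ↦ by positivity
  have hrow (i : Fin d) : HasSubgaussianMGF
      (fun ω ↦ (m : ℝ)⁻¹ * (∑ k, X ω k i * ∑ j, A i j * X ω k j) - A i i)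
      (.mk (σ2 / m) (by positivity)) μ := by
    have h := hasSubgaussianMGF_hutchinson_error hmeas hindep hlaw A i
    simp only [Fintype.card_fin] at h
    refine h.mono (NNReal.coe_le_coe.1 ?_)
    simp only [NNReal.coe_mk]
    gcongr
    exact le_ciSup (Set.finite_range fun i ↦ ∑ j ∈ Finset.univ \ {i}, A i j ^ 2).bddAbove i
  rw [← ofReal_measureReal]
  refine ENNReal.ofReal_le_ofReal ?_
  calc _ ≤ ∑ i : Fin d,
        μ.real {ω | ε ≤ |(m : ℝ)⁻¹ * (∑ k, X ω k i * ∑ j, A i j * X ω k j) - A i i|} :=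
        measureReal_le_iSup_le_sum (ι := Fin d) _ ε
    _ ≤ ∑ i : Fin d, 2 * Real.exp (-ε ^ 2 / (2 * (σ2 / m))) :=
        Finset.sum_le_sum fun i _ ↦ (hrow i).measureReal_abs_ge_le hε
    _ = _ := by
      rw [Finset.sum_const, Finset.card_univ, Fintype.card_fin, nsmul_eq_mul, ← mul_div_assoc,
        div_div_eq_mul_div]
      ring_nf
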